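/- Soundness and completeness of intuitionistic truth-tables with respect to R(M_IPL): for every finite set Γ∪{φ} of intuitionistic formulas, Γ ⊨_{R(M_IPL)} φ (every level valuation v ∈ L_IPL with v(γ)=T for all γ ∈ Γ has v(φ)=T) if and only if Γ ⊨_iPLV φ. -/
import Mathlib


/-- Intuitionistic formulas over signature Ω = {¬, →, ∨, ∧}. -/
inductive IF
  | var : ℕ → IF
  | neg : IF → IF
  | imp : IF → IF → IF
  | dis : IF → IF → IF
  | con : IF → IF → IF
deriving DecidableEq

/-- The three intuitionistic truth values F, U, T. -/
inductive VI
  | F | U | T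
deriving DecidableEq

def inegOp : VI → Set VI
  | .F => {.U, .T}
  | .U => {.U, .T}
  | .T => {.F}

def iimpOp : VI → VI → Set VI
  | .T, .T => {.T}
  | .T, _ => {.F}
  | _, .T => {.T}
  | _, _ => {.U, .T}

def idisOp : VI → VI → Set VI
  | .T, _ => {.T}
  | _, .T => {.T}
  | _, _ => {.F}

def iconOp : VI → VI → Set VI
  | .T, .T => {.T}
  | _, _ => {.F}

/-- Valuations over the Nmatrix M_IPL. -/
def IsValI (v : IF → VI) : Prop :=
  (∀ α, v (.neg α) ∈ inegOp (v α)) ∧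
  (∀ α β, v (.imp α β) ∈ iimpOp (v α) (v β)) ∧
  (∀ α β, v (.dis α β) ∈ idisOp (v α) (v β)) ∧
  (∀ α β, v (.con α β) ∈ iconOp (v α) (v β))

/-- Val₊(M_IPL): valuations taking only values T, F on propositional variables. -/
def ValPlus : Set (IF → VI) :=
  {v | IsValI v ∧ ∀ n, v (.var n) = VI.T ∨ v (.var n) = VI.F}

/-- Complexity of an intuitionistic formula. -/
def co : IF → ℕ
  | .var _ => 0
  | .neg α => co α + 1
  | .imp α β => co α + co β + 1
  | .dis α β => co α + co β + 1
  | .con α β => co α + co β + 1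

/-- The levels L_k for IPL. -/
def LevelI : ℕ → Set (IF → VI)
  | 0 => ValPlus
  | (k+1) => {v ∈ LevelI k | ∀ α, co α ≤ k + 1 → v α = VI.U →
      ∃ w ∈ LevelI k, w α = VI.F ∧ ∀ β, v β = VI.T → w β = VI.T}

/-- Intuitionistic level valuations L_IPL = ⋂_{k ≥ 0} L_k. -/
def LIPL : Set (IF → VI) := ⋂ k, LevelI k

/-- The consequence relation Γ ⊢_IPL φ of the Hilbert calculus H_IPL. -/
inductive IDeriv (Γ : Set IF) : IF → Prop
  | prem {φ : IF} : φ ∈ Γ → IDeriv Γ φ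
  | ax1 (α β : IF) : IDeriv Γ (α.imp (β.imp α))
  | ax2 (α β γ : IF) : IDeriv Γ ((α.imp (β.imp γ)).imp ((α.imp β).imp (α.imp γ)))
  | ax3 (α β : IF) : IDeriv Γ (α.imp (β.imp (α.con β)))
  | ax4 (α β : IF) : IDeriv Γ ((α.con β).imp α)
  | ax5 (α β : IF) : IDeriv Γ ((α.con β).imp β)
  | ax6 (α β : IF) : IDeriv Γ (α.imp (α.dis β))
  | ax7 (α β : IF) : IDeriv Γ (β.imp (α.dis β))
  | ax8 (α β γ : IF) : IDeriv Γ ((α.imp γ).imp ((β.imp γ).imp ((α.dis β).imp γ)))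
  | ax9 (α β : IF) : IDeriv Γ ((β.imp α).imp ((β.imp α.neg).imp β.neg))
  | ax10 (α β : IF) : IDeriv Γ (α.imp (α.neg.imp β))
  | mp {α β : IF} : IDeriv Γ (α.imp β) → IDeriv Γ α → IDeriv Γ β

/-- Δ is φ-saturated (w.r.t. ⊢_IPL). -/
def ISat (Δ : Set IF) (φ : IF) : Prop :=
  ¬ IDeriv Δ φ ∧ ∀ α ∉ Δ, IDeriv (insert α Δ) φ

open Classical in
/-- The valuation v_Δ associated to a φ-saturated set Δ in IPL. -/
noncomputable def vDeltaI (Δ : Set IF) : IF → VI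
  | .var n => if IF.var n ∈ Δ then VI.T else VI.F
  | .neg α => if IF.neg α ∈ Δ then VI.T else if α ∈ Δ then VI.F else VI.U
  | .imp α β => if IF.imp α β ∈ Δ then VI.T else if α ∈ Δ then VI.F else VI.U
  | .con α β => if α ∈ Δ ∧ β ∈ Δ then VI.T else VI.F
  | .dis α β => if α ∈ Δ ∨ β ∈ Δ then VI.T else VI.F

/-- Λ is closed under (immediate, hence all) subformulas. -/
def SubClosedI (Λ : Set IF) : Prop :=
  (∀ α, IF.neg α ∈ Λ → α ∈ Λ) ∧
  (∀ α β, IF.imp α β ∈ Λ → α ∈ Λ ∧ β ∈ Λ) ∧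
  (∀ α β, IF.dis α β ∈ Λ → α ∈ Λ ∧ β ∈ Λ) ∧
  (∀ α β, IF.con α β ∈ Λ → α ∈ Λ ∧ β ∈ Λ)

/-- Intuitionistic partial valuations with domain Λ (modelled as total functions
constrained on Λ). -/
def IsPValI (Λ : Set IF) (v : IF → VI) : Prop :=
  (∀ n, IF.var n ∈ Λ → v (.var n) = VI.T ∨ v (.var n) = VI.F) ∧
  (∀ α, IF.neg α ∈ Λ → v (.neg α) ∈ inegOp (v α)) ∧
  (∀ α β, IF.imp α β ∈ Λ → v (.imp α β) ∈ iimpOp (v α) (v β)) ∧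
  (∀ α β, IF.dis α β ∈ Λ → v (.dis α β) ∈ idisOp (v α) (v β)) ∧
  (∀ α β, IF.con α β ∈ Λ → v (.con α β) ∈ iconOp (v α) (v β))

/-- iPLV'(Λ): intuitionistic partial' level valuations over Λ. -/
def iPLV' (Λ : Set IF) : Set (IF → VI) :=
  {v | IsPValI Λ v ∧ ∀ α ∈ Λ, v α = VI.U →
    ∃ w ∈ LIPL, w α = VI.F ∧ ∀ β ∈ Λ, v β = VI.T → w β = VI.T}

/-- iPLV(Λ): intuitionistic partial level valuations over Λ, defined as the largest
subset of iPV(Λ) whose condition is witnessed inside itself. -/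
def iPLV (Λ : Set IF) : Set (IF → VI) :=
  ⋃₀ {S | (∀ v ∈ S, IsPValI Λ v) ∧
      ∀ v ∈ S, ∀ α ∈ Λ, v α = VI.U →
        ∃ w ∈ S, w α = VI.F ∧ ∀ β ∈ Λ, v β = VI.T → w β = VI.T}

/-- Set of subformulas of an intuitionistic formula. -/
def IF.subf : IF → Finset IF
  | .var n => {.var n}
  | .neg α => insert (.neg α) α.subf
  | .imp α β => insert (.imp α β) (α.subf ∪ β.subf)
  | .dis α β => insert (.dis α β) (α.subf ∪ β.subf)
  | .con α β => insert (.con α β) (α.subf ∪ β.subf)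

/-- Γ ⊨_iPLV φ : consequence w.r.t. the intuitionistic truth tables, over the set Λ
of subformulas of Γ ∪ {φ}. -/
def iPLVConseq (Γ : Finset IF) (φ : IF) : Prop :=
  ∀ v ∈ iPLV (↑(Γ.biUnion IF.subf ∪ φ.subf) : Set IF),
    (∀ β ∈ Γ, v β = VI.T) → v φ = VI.T

section IPLAux

/-! ### Basic level lemmas -/

lemma levelI_succ_subset (k : ℕ) : LevelI (k+1) ⊆ LevelI k := fun _ hv => hv.1

lemma levelI_antitone : ∀ {j k : ℕ}, j ≤ k → LevelI k ⊆ LevelI j := by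
  intro j k h
  induction h with
  | refl => exact fun v hv => hv
  | step _ ih => exact fun v hv => ih (levelI_succ_subset _ hv)

lemma levelI_valplus {k : ℕ} : LevelI k ⊆ ValPlus := levelI_antitone (Nat.zero_le k)

/-! ### Subformula lemmas -/

lemma mem_subf_self : ∀ α : IF, α ∈ α.subf
  | .var _ => by simp [IF.subf]
  | .neg _ => by simp [IF.subf]
  | .imp _ _ => by simp [IF.subf]
  | .dis _ _ => by simp [IF.subf]
  | .con _ _ => by simp [IF.subf]

lemma subf_trans : ∀ (α β : IF), β ∈ α.subf → β.subf ⊆ α.subf := by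
  intro α
  induction α with
  | var n =>
      intro β hβ
      simp [IF.subf] at hβ
      subst hβ; simp [IF.subf]
  | neg γ ih =>
      intro β hβ
      rcases Finset.mem_insert.1 hβ with h | h
      · subst h; exact fun x hx => hx
      · exact (ih β h).trans (Finset.subset_insert _ _)
  | imp γ δ ihγ ihδ =>
      intro β hβ
      rcases Finset.mem_insert.1 hβ with h | h
      · subst h; exact fun x hx => hx
      · rcases Finset.mem_union.1 h with h' | h'
        · exact ((ihγ β h').trans Finset.subset_union_left).trans (Finset.subset_insert _ _)
        · exact ((ihδ β h').trans Finset.subset_union_right).trans (Finset.subset_insert _ _)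
  | dis γ δ ihγ ihδ =>
      intro β hβ
      rcases Finset.mem_insert.1 hβ with h | h
      · subst h; exact fun x hx => hx
      · rcases Finset.mem_union.1 h with h' | h'
        · exact ((ihγ β h').trans Finset.subset_union_left).trans (Finset.subset_insert _ _)
        · exact ((ihδ β h').trans Finset.subset_union_right).trans (Finset.subset_insert _ _)
  | con γ δ ihγ ihδ =>
      intro β hβ
      rcases Finset.mem_insert.1 hβ with h | h
      · subst h; exact fun x hx => hx
      · rcases Finset.mem_union.1 h with h' | h'
        · exact ((ihγ β h').trans Finset.subset_union_left).trans (Finset.subset_insert _ _)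
        · exact ((ihδ β h').trans Finset.subset_union_right).trans (Finset.subset_insert _ _)

lemma subf_union_key (Γ : Finset IF) (φ : IF) :
    ∀ β ∈ Γ.biUnion IF.subf ∪ φ.subf, β.subf ⊆ Γ.biUnion IF.subf ∪ φ.subf := by
  intro β hβ
  rcases Finset.mem_union.1 hβ with h | h
  · rcases Finset.mem_biUnion.1 h with ⟨α, hα, hβα⟩
    exact (subf_trans α β hβα).trans
      ((Finset.subset_biUnion_of_mem _ hα).trans Finset.subset_union_left)
  · exact (subf_trans φ β h).trans Finset.subset_union_right

lemma subf_union_closed (Γ : Finset IF) (φ : IF) :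
    SubClosedI (↑(Γ.biUnion IF.subf ∪ φ.subf) : Set IF) := by
  have key := subf_union_key Γ φ
  refine ⟨?_, ?_, ?_, ?_⟩
  · intro α hα
    exact Finset.mem_coe.2 (key _ (Finset.mem_coe.1 hα)
      (Finset.mem_insert_of_mem (mem_subf_self α)))
  · intro α β hαβ
    exact ⟨Finset.mem_coe.2 (key _ (Finset.mem_coe.1 hαβ)
      (Finset.mem_insert_of_mem (Finset.mem_union_left _ (mem_subf_self α)))),
      Finset.mem_coe.2 (key _ (Finset.mem_coe.1 hαβ)
      (Finset.mem_insert_of_mem (Finset.mem_union_right _ (mem_subf_self β))))⟩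
  · intro α β hαβ
    exact ⟨Finset.mem_coe.2 (key _ (Finset.mem_coe.1 hαβ)
      (Finset.mem_insert_of_mem (Finset.mem_union_left _ (mem_subf_self α)))),
      Finset.mem_coe.2 (key _ (Finset.mem_coe.1 hαβ)
      (Finset.mem_insert_of_mem (Finset.mem_union_right _ (mem_subf_self β))))⟩
  · intro α β hαβ
    exact ⟨Finset.mem_coe.2 (key _ (Finset.mem_coe.1 hαβ)
      (Finset.mem_insert_of_mem (Finset.mem_union_left _ (mem_subf_self α)))),
      Finset.mem_coe.2 (key _ (Finset.mem_coe.1 hαβ)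
      (Finset.mem_insert_of_mem (Finset.mem_union_right _ (mem_subf_self β))))⟩

end IPLAux
section IPLKripke

/-- Order between worlds: preservation of truth on Λ. -/
def leS (Λ : Set IF) (w z : IF → VI) : Prop := ∀ β ∈ Λ, w β = VI.T → z β = VI.T

lemma leS_refl (Λ : Set IF) (w : IF → VI) : leS Λ w w := fun _ _ h => h

lemma leS_trans {Λ : Set IF} {w z y : IF → VI} (h1 : leS Λ w z) (h2 : leS Λ z y) :
    leS Λ w y := fun β hβ h => h2 β hβ (h1 β hβ h)

/-- Kripke forcing over the set of worlds S with order leS Λ. -/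
def force (S : Set (IF → VI)) (Λ : Set IF) : IF → (IF → VI) → Prop
  | .var n, w => IF.var n ∈ Λ ∧ w (.var n) = VI.T
  | .neg γ, w => ∀ z ∈ S, leS Λ w z → ¬ force S Λ γ z
  | .imp γ δ, w => ∀ z ∈ S, leS Λ w z → force S Λ γ z → force S Λ δ z
  | .dis γ δ, w => force S Λ γ w ∨ force S Λ δ w
  | .con γ δ, w => force S Λ γ w ∧ force S Λ δ w

lemma force_mono {S : Set (IF → VI)} {Λ : Set IF} :
    ∀ (β : IF) {w z : IF → VI}, leS Λ w z → force S Λ β w → force S Λ β z := by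
  intro β
  induction β with
  | var n => intro w z h hf; exact ⟨hf.1, h _ hf.1 hf.2⟩
  | neg γ ih => intro w z h hf y hy hzy; exact hf y hy (leS_trans h hzy)
  | imp γ δ ih1 ih2 => intro w z h hf y hy hzy; exact hf y hy (leS_trans h hzy)
  | dis γ δ ih1 ih2 =>
      intro w z h hf
      rcases hf with hf | hf
      · exact Or.inl (ih1 h hf)
      · exact Or.inr (ih2 h hf)
  | con γ δ ih1 ih2 => intro w z h hf; exact ⟨ih1 h hf.1, ih2 h hf.2⟩

open Classical in
/-- The total valuation associated to a world of the Kripke model. -/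
noncomputable def kval (S : Set (IF → VI)) (Λ : Set IF) (w : IF → VI) : IF → VI
  | .var n => if force S Λ (.var n) w then VI.T else VI.F
  | .neg γ => if force S Λ (.neg γ) w then VI.T else if force S Λ γ w then VI.F else VI.U
  | .imp γ δ => if force S Λ (.imp γ δ) w then VI.T else if force S Λ γ w then VI.F else VI.U
  | .dis γ δ => if force S Λ (.dis γ δ) w then VI.T else VI.F
  | .con γ δ => if force S Λ (.con γ δ) w then VI.T else VI.F

lemma kval_T_iff {S : Set (IF → VI)} {Λ : Set IF} {w : IF → VI} (β : IF) :
    kval S Λ w β = VI.T ↔ force S Λ β w := by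
  cases β <;> simp only [kval] <;> split_ifs <;> simp_all

end IPLKripke
section IPLKval

lemma kval_isval {S : Set (IF → VI)} {Λ : Set IF} {w : IF → VI} (hw : w ∈ S) :
    IsValI (kval S Λ w) := by
  refine ⟨?_, ?_, ?_, ?_⟩
  · -- negation
    intro γ
    by_cases h1 : force S Λ (.neg γ) w
    · have hγ : ¬ force S Λ γ w := h1 w hw (leS_refl _ _)
      have hT : kval S Λ w (.neg γ) = VI.T := by simp [kval, h1]
      rw [hT]
      cases hv : kval S Λ w γ with
      | F => simp [inegOp]
      | U => simp [inegOp]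
      | T => exact absurd ((kval_T_iff γ).1 hv) hγ
    · by_cases h2 : force S Λ γ w
      · have hF : kval S Λ w (.neg γ) = VI.F := by simp [kval, h1, h2]
        rw [hF, (kval_T_iff γ).2 h2]
        simp [inegOp]
      · have hU : kval S Λ w (.neg γ) = VI.U := by simp [kval, h1, h2]
        rw [hU]
        cases hv : kval S Λ w γ with
        | F => simp [inegOp]
        | U => simp [inegOp]
        | T => exact absurd ((kval_T_iff γ).1 hv) h2
  · -- implication
    intro γ δ
    by_cases h1 : force S Λ (.imp γ δ) w
    · have hT : kval S Λ w (.imp γ δ) = VI.T := by simp [kval, h1]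
      rw [hT]
      cases ha : kval S Λ w γ with
      | T =>
          have hfδ : force S Λ δ w := h1 w hw (leS_refl _ _) ((kval_T_iff γ).1 ha)
          rw [(kval_T_iff δ).2 hfδ]
          simp [iimpOp]
      | F => cases hb : kval S Λ w δ <;> simp [iimpOp]
      | U => cases hb : kval S Λ w δ <;> simp [iimpOp]
    · have hδ : ¬ force S Λ δ w := by
        intro hfδ
        exact h1 (fun z hz hle _ => force_mono δ hle hfδ)
      by_cases h2 : force S Λ γ w
      · have hF : kval S Λ w (.imp γ δ) = VI.F := by simp [kval, h1, h2]
        rw [hF, (kval_T_iff γ).2 h2]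
        cases hb : kval S Λ w δ with
        | F => simp [iimpOp]
        | U => simp [iimpOp]
        | T => exact absurd ((kval_T_iff δ).1 hb) hδ
      · have hU : kval S Λ w (.imp γ δ) = VI.U := by simp [kval, h1, h2]
        rw [hU]
        cases ha : kval S Λ w γ with
        | T => exact absurd ((kval_T_iff γ).1 ha) h2
        | F =>
            cases hb : kval S Λ w δ with
            | F => simp [iimpOp]
            | U => simp [iimpOp]
            | T => exact absurd ((kval_T_iff δ).1 hb) hδ
        | U =>
            cases hb : kval S Λ w δ with
            | F => simp [iimpOp]
            | U => simp [iimpOp]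
            | T => exact absurd ((kval_T_iff δ).1 hb) hδ
  · -- disjunction
    intro γ δ
    by_cases h : force S Λ (.dis γ δ) w
    · have hT : kval S Λ w (.dis γ δ) = VI.T := by simp [kval, h]
      rw [hT]
      rcases h with hγ | hδ
      · rw [(kval_T_iff γ).2 hγ]
        simp [idisOp]
      · rw [(kval_T_iff δ).2 hδ]
        cases ha : kval S Λ w γ <;> simp [idisOp]
    · have hF : kval S Λ w (.dis γ δ) = VI.F := by simp [kval, h]
      rw [hF]
      have hγ : ¬ force S Λ γ w := fun hf => h (Or.inl hf)
      have hδ : ¬ force S Λ δ w := fun hf => h (Or.inr hf)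
      cases ha : kval S Λ w γ with
      | T => exact absurd ((kval_T_iff γ).1 ha) hγ
      | F =>
          cases hb : kval S Λ w δ with
          | T => exact absurd ((kval_T_iff δ).1 hb) hδ
          | F => simp [idisOp]
          | U => simp [idisOp]
      | U =>
          cases hb : kval S Λ w δ with
          | T => exact absurd ((kval_T_iff δ).1 hb) hδ
          | F => simp [idisOp]
          | U => simp [idisOp]
  · -- conjunction
    intro γ δ
    by_cases h : force S Λ (.con γ δ) w
    · have hT : kval S Λ w (.con γ δ) = VI.T := by simp [kval, h]
      rw [hT, (kval_T_iff γ).2 h.1, (kval_T_iff δ).2 h.2]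
      simp [iconOp]
    · have hF : kval S Λ w (.con γ δ) = VI.F := by simp [kval, h]
      rw [hF]
      have h' : ¬ (force S Λ γ w ∧ force S Λ δ w) := h
      cases ha : kval S Λ w γ with
      | T =>
          cases hb : kval S Λ w δ with
          | T => exact absurd ⟨(kval_T_iff γ).1 ha, (kval_T_iff δ).1 hb⟩ h'
          | F => simp [iconOp]
          | U => simp [iconOp]
      | F => cases hb : kval S Λ w δ <;> simp [iconOp]
      | U => cases hb : kval S Λ w δ <;> simp [iconOp]

end IPLKval
section IPLKvalLevel

lemma kval_level {S : Set (IF → VI)} {Λ : Set IF} :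
    ∀ (k : ℕ) {w : IF → VI}, w ∈ S → kval S Λ w ∈ LevelI k := by
  intro k
  induction k with
  | zero =>
      intro w hw
      refine ⟨kval_isval hw, ?_⟩
      intro n
      by_cases h : force S Λ (.var n) w <;> simp [kval, h]
  | succ k ih =>
      intro w hw
      refine ⟨ih hw, ?_⟩
      intro α _ hU
      cases α with
      | var n =>
          exfalso
          revert hU
          by_cases h : force S Λ (.var n) w <;> simp [kval, h]
      | dis γ δ =>
          exfalso
          revert hU
          by_cases h : force S Λ (.dis γ δ) w <;> simp [kval, h]
      | con γ δ =>
          exfalso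
          revert hU
          by_cases h : force S Λ (.con γ δ) w <;> simp [kval, h]
      | neg γ =>
          have h1 : ¬ force S Λ (.neg γ) w := by
            intro hf; simp [kval, hf] at hU
          have h1' : ∃ z, z ∈ S ∧ leS Λ w z ∧ force S Λ γ z := by
            by_contra hcon
            push_neg at hcon
            exact h1 (fun z hz hle hf => hcon z hz hle hf)
          obtain ⟨z, hz, hle, hfz⟩ := h1'
          refine ⟨kval S Λ z, ih hz, ?_, ?_⟩
          · have hnz : ¬ force S Λ (.neg γ) z := fun hf => hf z hz (leS_refl _ _) hfz
            simp [kval, hnz, hfz]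
          · intro β hβ
            rw [kval_T_iff] at hβ ⊢
            exact force_mono β hle hβ
      | imp γ δ =>
          have h1 : ¬ force S Λ (.imp γ δ) w := by
            intro hf; simp [kval, hf] at hU
          have h1' : ∃ z, z ∈ S ∧ leS Λ w z ∧ force S Λ γ z ∧ ¬ force S Λ δ z := by
            by_contra hcon
            push_neg at hcon
            exact h1 (fun z hz hle hf => hcon z hz hle hf)
          obtain ⟨z, hz, hle, hfγ, hfδ⟩ := h1'
          refine ⟨kval S Λ z, ih hz, ?_, ?_⟩
          · have hnz : ¬ force S Λ (.imp γ δ) z :=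
              fun hf => hfδ (hf z hz (leS_refl _ _) hfγ)
            simp [kval, hnz, hfγ]
          · intro β hβ
            rw [kval_T_iff] at hβ ⊢
            exact force_mono β hle hβ

lemma kval_LIPL {S : Set (IF → VI)} {Λ : Set IF} {w : IF → VI} (hw : w ∈ S) :
    kval S Λ w ∈ LIPL :=
  Set.mem_iInter.2 fun k => kval_level k hw

end IPLKvalLevel
section IPLTruth

lemma truth_lemma {S : Set (IF → VI)} {Λ : Set IF}
    (hPV : ∀ v ∈ S, IsPValI Λ v)
    (hWit : ∀ v ∈ S, ∀ α ∈ Λ, v α = VI.U →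
        ∃ w ∈ S, w α = VI.F ∧ ∀ β ∈ Λ, v β = VI.T → w β = VI.T)
    (hcl : SubClosedI Λ) :
    ∀ β ∈ Λ, ∀ w ∈ S, (w β = VI.T ↔ force S Λ β w) := by
  intro β
  induction β with
  | var n =>
      intro hβ w hw
      exact ⟨fun h => ⟨hβ, h⟩, fun h => h.2⟩
  | neg γ ih =>
      intro hβ w hw
      have hγΛ : γ ∈ Λ := hcl.1 γ hβ
      constructor
      · intro hT z hz hle hfz
        have hzT : z (.neg γ) = VI.T := hle _ hβ hT
        have hm := (hPV z hz).2.1 γ hβ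
        have hzγ : z γ = VI.T := (ih hγΛ z hz).2 hfz
        rw [hzT, hzγ] at hm
        simp [inegOp] at hm
      · intro hf
        by_contra hne
        by_cases hgw : w γ = VI.T
        · exact hf w hw (leS_refl _ _) ((ih hγΛ w hw).1 hgw)
        · have hU : w (.neg γ) = VI.U := by
            have hm := (hPV w hw).2.1 γ hβ
            cases h' : w γ with
            | T => exact absurd h' hgw
            | F => rw [h'] at hm; simp [inegOp] at hm; exact hm.resolve_right hne
            | U => rw [h'] at hm; simp [inegOp] at hm; exact hm.resolve_right hne
          obtain ⟨z, hz, hzF, hzle⟩ := hWit w hw _ hβ hU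
          have hzγ : z γ = VI.T := by
            have hm := (hPV z hz).2.1 γ hβ
            rw [hzF] at hm
            cases h' : z γ with
            | T => rfl
            | F => rw [h'] at hm; simp [inegOp] at hm
            | U => rw [h'] at hm; simp [inegOp] at hm
          exact hf z hz hzle ((ih hγΛ z hz).1 hzγ)
  | imp γ δ ihγ ihδ =>
      intro hβ w hw
      have hγΛ : γ ∈ Λ := (hcl.2.1 γ δ hβ).1
      have hδΛ : δ ∈ Λ := (hcl.2.1 γ δ hβ).2
      constructor
      · intro hT z hz hle hfγ
        have hzT : z (.imp γ δ) = VI.T := hle _ hβ hT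
        have hzγ : z γ = VI.T := (ihγ hγΛ z hz).2 hfγ
        have hm := (hPV z hz).2.2.1 γ δ hβ
        rw [hzT, hzγ] at hm
        have hzδ : z δ = VI.T := by
          cases h' : z δ with
          | T => rfl
          | F => rw [h'] at hm; simp [iimpOp] at hm
          | U => rw [h'] at hm; simp [iimpOp] at hm
        exact (ihδ hδΛ z hz).1 hzδ
      · intro hf
        by_contra hne
        have hm := (hPV w hw).2.2.1 γ δ hβ
        have hδne : w δ ≠ VI.T := by
          intro h
          rw [h] at hm
          cases h' : w γ with
          | T => rw [h'] at hm; simp [iimpOp] at hm; exact hne hm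
          | F => rw [h'] at hm; simp [iimpOp] at hm; exact hne hm
          | U => rw [h'] at hm; simp [iimpOp] at hm; exact hne hm
        by_cases hγT : w γ = VI.T
        · exact hδne ((ihδ hδΛ w hw).2 (hf w hw (leS_refl _ _) ((ihγ hγΛ w hw).1 hγT)))
        · have hU : w (.imp γ δ) = VI.U := by
            cases h' : w γ with
            | T => exact absurd h' hγT
            | F =>
                cases h'' : w δ with
                | T => exact absurd h'' hδne
                | F => rw [h', h''] at hm; simp [iimpOp] at hm; exact hm.resolve_right hne
                | U => rw [h', h''] at hm; simp [iimpOp] at hm; exact hm.resolve_right hne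
            | U =>
                cases h'' : w δ with
                | T => exact absurd h'' hδne
                | F => rw [h', h''] at hm; simp [iimpOp] at hm; exact hm.resolve_right hne
                | U => rw [h', h''] at hm; simp [iimpOp] at hm; exact hm.resolve_right hne
          obtain ⟨z, hz, hzF, hzle⟩ := hWit w hw _ hβ hU
          have hm2 := (hPV z hz).2.2.1 γ δ hβ
          rw [hzF] at hm2
          have hzγ : z γ = VI.T := by
            cases h' : z γ with
            | T => rfl
            | F => cases h'' : z δ <;> (rw [h', h''] at hm2; simp [iimpOp] at hm2)
            | U => cases h'' : z δ <;> (rw [h', h''] at hm2; simp [iimpOp] at hm2)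
          have hzδ : z δ ≠ VI.T := by
            intro h
            rw [hzγ, h] at hm2
            simp [iimpOp] at hm2
          exact hzδ ((ihδ hδΛ z hz).2 (hf z hz hzle ((ihγ hγΛ z hz).1 hzγ)))
  | dis γ δ ihγ ihδ =>
      intro hβ w hw
      have hγΛ : γ ∈ Λ := (hcl.2.2.1 γ δ hβ).1
      have hδΛ : δ ∈ Λ := (hcl.2.2.1 γ δ hβ).2
      have hm := (hPV w hw).2.2.2.1 γ δ hβ
      constructor
      · intro hT
        rw [hT] at hm
        cases h' : w γ with
        | T => exact Or.inl ((ihγ hγΛ w hw).1 h')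
        | F =>
            cases h'' : w δ with
            | T => exact Or.inr ((ihδ hδΛ w hw).1 h'')
            | F => rw [h', h''] at hm; simp [idisOp] at hm
            | U => rw [h', h''] at hm; simp [idisOp] at hm
        | U =>
            cases h'' : w δ with
            | T => exact Or.inr ((ihδ hδΛ w hw).1 h'')
            | F => rw [h', h''] at hm; simp [idisOp] at hm
            | U => rw [h', h''] at hm; simp [idisOp] at hm
      · intro hf
        rcases hf with h | h
        · rw [(ihγ hγΛ w hw).2 h] at hm
          simpa [idisOp] using hm
        · rw [(ihδ hδΛ w hw).2 h] at hm
          cases h' : w γ <;> rw [h'] at hm <;> simpa [idisOp] using hm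
  | con γ δ ihγ ihδ =>
      intro hβ w hw
      have hγΛ : γ ∈ Λ := (hcl.2.2.2 γ δ hβ).1
      have hδΛ : δ ∈ Λ := (hcl.2.2.2 γ δ hβ).2
      have hm := (hPV w hw).2.2.2.2 γ δ hβ
      constructor
      · intro hT
        rw [hT] at hm
        have hwγ : w γ = VI.T ∧ w δ = VI.T := by
          cases h' : w γ with
          | T =>
              cases h'' : w δ with
              | T => exact ⟨rfl, rfl⟩
              | F => rw [h', h''] at hm; simp [iconOp] at hm
              | U => rw [h', h''] at hm; simp [iconOp] at hm
          | F => cases h'' : w δ <;> (rw [h', h''] at hm; simp [iconOp] at hm)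
          | U => cases h'' : w δ <;> (rw [h', h''] at hm; simp [iconOp] at hm)
        exact ⟨(ihγ hγΛ w hw).1 hwγ.1, (ihδ hδΛ w hw).1 hwγ.2⟩
      · intro hf
        rw [(ihγ hγΛ w hw).2 hf.1, (ihδ hδΛ w hw).2 hf.2] at hm
        simpa [iconOp] using hm

end IPLTruth

/-- Soundness and completeness of intuitionistic truth-tables
w.r.t. R(M_IPL), for finite Γ ∪ {φ}. -/
theorem ipl_tables_sound_complete (Γ : Finset IF) (φ : IF) :
    (∀ v ∈ LIPL, (∀ γ ∈ Γ, v γ = VI.T) → v φ = VI.T) ↔ iPLVConseq Γ φ := by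
  have hcl : SubClosedI (↑(Γ.biUnion IF.subf ∪ φ.subf) : Set IF) := subf_union_closed Γ φ
  have hφmem : φ ∈ Γ.biUnion IF.subf ∪ φ.subf :=
    Finset.mem_union_right _ (mem_subf_self φ)
  have hΓmem : ∀ γ ∈ Γ, γ ∈ Γ.biUnion IF.subf ∪ φ.subf := fun γ hγ =>
    Finset.mem_union_left _ (Finset.mem_biUnion.2 ⟨γ, hγ, mem_subf_self γ⟩)
  constructor
  · -- soundness direction: LHS → iPLVConseq
    intro hL v hv hΓ
    obtain ⟨S, hS, hvS⟩ := hv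
    have hforceφ : force S (↑(Γ.biUnion IF.subf ∪ φ.subf)) φ v := by
      have hk := hL (kval S (↑(Γ.biUnion IF.subf ∪ φ.subf)) v) (kval_LIPL hvS) ?_
      · exact (kval_T_iff φ).1 hk
      · intro γ hγ
        exact (kval_T_iff γ).2
          ((truth_lemma hS.1 hS.2 hcl γ (Finset.mem_coe.2 (hΓmem γ hγ)) v hvS).1 (hΓ γ hγ))
    exact (truth_lemma hS.1 hS.2 hcl φ (Finset.mem_coe.2 hφmem) v hvS).2 hforceφ
  · -- completeness direction: iPLVConseq → LHS
    intro hC v hvL hΓ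
    have hlev : ∀ k, v ∈ LevelI k := fun k => Set.mem_iInter.1 hvL k
    set Λfin := Γ.biUnion IF.subf ∪ φ.subf with hΛdef
    set n := Λfin.card with hndef
    set m := Λfin.sup co + 1 with hmdef
    set S : Set (IF → VI) :=
      {w | w ∈ LevelI (m * (n - (Λfin.filter (fun β => w β = VI.T)).card))} with hSdef
    have hgood1 : ∀ w ∈ S, IsPValI (↑Λfin) w := by
      intro w hw
      have hwvp : w ∈ ValPlus := levelI_valplus hw
      exact ⟨fun nn _ => hwvp.2 nn, fun α _ => hwvp.1.1 α, fun α β _ => hwvp.1.2.1 α β,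
             fun α β _ => hwvp.1.2.2.1 α β, fun α β _ => hwvp.1.2.2.2 α β⟩
    have hgood2 : ∀ w ∈ S, ∀ α ∈ (↑Λfin : Set IF), w α = VI.U →
        ∃ z ∈ S, z α = VI.F ∧ ∀ β ∈ (↑Λfin : Set IF), w β = VI.T → z β = VI.T := by
      intro w hw α hαΛ hU
      have hα : α ∈ Λfin := Finset.mem_coe.1 hαΛ
      set t := (Λfin.filter (fun β => w β = VI.T)).card with htdef
      have hwvp : w ∈ ValPlus := levelI_valplus hw
      have htlt : t < n := by
        apply Finset.card_lt_card
        refine (Finset.ssubset_iff_of_subset (Finset.filter_subset _ _)).2 ⟨α, hα, ?_⟩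
        intro hmem
        have := (Finset.mem_filter.1 hmem).2
        rw [hU] at this
        exact VI.noConfusion this
      have hm1 : 1 ≤ m := Nat.le_add_left 1 _
      have hpos : 0 < m * (n - t) := Nat.mul_pos (by omega) (by omega)
      have hwK : w ∈ LevelI ((m * (n - t) - 1) + 1) := by
        have he : (m * (n - t) - 1) + 1 = m * (n - t) := by omega
        rw [he]; exact hw
      have hco : co α ≤ (m * (n - t) - 1) + 1 := by
        have h1 : co α ≤ Λfin.sup co := Finset.le_sup hα
        have h2 : m ≤ m * (n - t) := Nat.le_mul_of_pos_right m (by omega)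
        omega
      obtain ⟨z, hzL, hzF, hzT⟩ := hwK.2 α hco hU
      have hzvp : z ∈ ValPlus := levelI_valplus hzL
      -- find a subformula newly made true by z
      have hkey : ∃ γ₀ ∈ Λfin, z γ₀ = VI.T ∧ w γ₀ ≠ VI.T := by
        cases α with
        | var nn =>
            exfalso
            rcases hwvp.2 nn with h | h <;> rw [hU] at h <;> exact VI.noConfusion h
        | dis γ₀ δ₀ =>
            exfalso
            have hm' := hwvp.1.2.2.1 γ₀ δ₀
            rw [hU] at hm'
            cases h' : w γ₀ <;> cases h'' : w δ₀ <;> rw [h', h''] at hm' <;>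
              simp [idisOp] at hm'
        | con γ₀ δ₀ =>
            exfalso
            have hm' := hwvp.1.2.2.2 γ₀ δ₀
            rw [hU] at hm'
            cases h' : w γ₀ <;> cases h'' : w δ₀ <;> rw [h', h''] at hm' <;>
              simp [iconOp] at hm'
        | neg γ₀ =>
            have hγΛ : γ₀ ∈ Λfin := Finset.mem_coe.1 (hcl.1 γ₀ hαΛ)
            have hz : z γ₀ = VI.T := by
              have hm' := hzvp.1.1 γ₀
              rw [hzF] at hm'
              cases h' : z γ₀ with
              | T => rfl
              | F => rw [h'] at hm'; simp [inegOp] at hm'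
              | U => rw [h'] at hm'; simp [inegOp] at hm'
            have hwne : w γ₀ ≠ VI.T := by
              intro h
              have hm' := hwvp.1.1 γ₀
              rw [hU, h] at hm'
              simp [inegOp] at hm'
            exact ⟨γ₀, hγΛ, hz, hwne⟩
        | imp γ₀ δ₀ =>
            have hγΛ : γ₀ ∈ Λfin := Finset.mem_coe.1 (hcl.2.1 γ₀ δ₀ hαΛ).1
            have hz : z γ₀ = VI.T := by
              have hm' := hzvp.1.2.1 γ₀ δ₀
              rw [hzF] at hm'
              cases h' : z γ₀ with
              | T => rfl
              | F => cases h'' : z δ₀ <;> (rw [h', h''] at hm'; simp [iimpOp] at hm')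
              | U => cases h'' : z δ₀ <;> (rw [h', h''] at hm'; simp [iimpOp] at hm')
            have hwne : w γ₀ ≠ VI.T := by
              intro h
              have hm' := hwvp.1.2.1 γ₀ δ₀
              rw [hU, h] at hm'
              cases h'' : w δ₀ <;> rw [h''] at hm' <;> simp [iimpOp] at hm'
            exact ⟨γ₀, hγΛ, hz, hwne⟩
      obtain ⟨γ₀, hγ₀Λ, hzγ₀, hwγ₀⟩ := hkey
      set tz := (Λfin.filter (fun β => z β = VI.T)).card with htzdef
      have hsub : Λfin.filter (fun β => w β = VI.T) ⊂ Λfin.filter (fun β => z β = VI.T) := by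
        constructor
        · intro β hβ
          have hβ' := Finset.mem_filter.1 hβ
          exact Finset.mem_filter.2 ⟨hβ'.1, hzT β hβ'.2⟩
        · intro hsub'
          exact hwγ₀ (Finset.mem_filter.1 (hsub' (Finset.mem_filter.2 ⟨hγ₀Λ, hzγ₀⟩))).2
      have htz1 : t + 1 ≤ tz := Finset.card_lt_card hsub
      have htzn : tz ≤ n := Finset.card_le_card (Finset.filter_subset _ _)
      have hzS : z ∈ S := by
        have e1 : n - t = (n - t - 1) + 1 := by omega
        have e2 : m * (n - t) = m * (n - t - 1) + m := by rw [← Nat.mul_succ]; exact congrArg (fun x => m * x) e1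
        have h3 : m * (n - tz) ≤ m * (n - t - 1) := Nat.mul_le_mul_left m (by omega)
        have hle : m * (n - tz) ≤ m * (n - t) - 1 := by omega
        exact levelI_antitone hle hzL
      exact ⟨z, hzS, hzF, fun β _ hT => hzT β hT⟩
    have hvS : v ∈ S := hlev _
    exact hC v (Set.mem_sUnion.2 ⟨S, ⟨hgood1, hgood2⟩, hvS⟩) hΓ
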